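/- arXiv:2406.06398 — 5 statements merged into one kernel-verified Lean document; each statement's English description precedes it below -/
import Mathlib

section
/- Let γ > 0 and let (A_t)_{t≥0} be a sequence of positive reals satisfying A_{t+1} − A_t ≥ √(γ A_t) for all t ≥ 0, with A_0 ≤ γ/9. Define t_0 := ⌈log₂ log₃ (γ/A_0)⌉ − 1 (which is ≥ 0). Then for every t ≥ 0: if t < t_0 then A_t ≥ γ·(A_0/γ)^{1/2^t}, and if t ≥ t_0 then A_t ≥ (γ/9)·(t − t_0 + 1)². -/
/-- Squared growth with delay (Lemma `SquaredGrowthWithDelay`):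
if `A` is a positive sequence with `A (t+1) - A t ≥ √(γ * A t)` for all `t`
and `A 0 ≤ γ / 9`, then, with `t₀ := ⌈log₂ log₃ (γ / A 0)⌉ - 1`, one has
`t₀ ≥ 0` and, for every `t`: if `t < t₀` then `A t ≥ γ * (A 0 / γ) ^ (1 / 2 ^ t)`,
and if `t ≥ t₀` then `A t ≥ (γ / 9) * (t - t₀ + 1) ^ 2`. -/
theorem squared_growth_with_delay
    (γ : ℝ) (hγ : 0 < γ) (A : ℕ → ℝ) (hApos : ∀ t, 0 < A t)
    (hgrowth : ∀ t, A (t + 1) - A t ≥ Real.sqrt (γ * A t))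
    (hA0 : A 0 ≤ γ / 9)
    (t₀ : ℤ) (ht₀ : t₀ = ⌈Real.logb 2 (Real.logb 3 (γ / A 0))⌉ - 1) :
    0 ≤ t₀ ∧
      ∀ t : ℕ,
        ((t : ℤ) < t₀ → A t ≥ γ * (A 0 / γ) ^ ((1 : ℝ) / 2 ^ t)) ∧
        (t₀ ≤ (t : ℤ) → A t ≥ γ / 9 * ((t : ℝ) - (t₀ : ℝ) + 1) ^ 2) := by
  have hA0pos := hApos 0
  set x : ℝ := A 0 / γ with hxdef
  have hxpos : 0 < x := div_pos hA0pos hγ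
  have hratio : (9 : ℝ) ≤ γ / A 0 := by
    rw [le_div_iff₀ hA0pos]; linarith
  have hrpos : (0 : ℝ) < γ / A 0 := by linarith
  set y : ℝ := Real.logb 3 (γ / A 0) with hydef
  have h9 : Real.logb 3 (9 : ℝ) = 2 := by
    rw [show (9 : ℝ) = 3 ^ (2 : ℕ) by norm_num, Real.logb_pow,
      Real.logb_self_eq_one (by norm_num)]
    norm_num
  have hy2 : (2 : ℝ) ≤ y := by
    rw [hydef, ← h9]
    exact Real.logb_le_logb_of_le (by norm_num) (by norm_num) hratio
  have hlogb2 : (1 : ℝ) ≤ Real.logb 2 y := by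
    calc (1 : ℝ) = Real.logb 2 2 := by
          rw [Real.logb_self_eq_one (by norm_num)]
      _ ≤ Real.logb 2 y := Real.logb_le_logb_of_le (by norm_num) (by norm_num) hy2
  have ht0nn : 0 ≤ t₀ := by
    have hceil : (1 : ℤ) ≤ ⌈Real.logb 2 y⌉ := by
      have := Int.le_ceil (Real.logb 2 y)
      exact_mod_cast le_trans hlogb2 this
    omega
  set n₀ : ℕ := t₀.toNat with hn₀def
  have ht₀n : t₀ = (n₀ : ℤ) := (Int.toNat_of_nonneg ht0nn).symm
  -- Phase 1: holds for all t
  have phase1 : ∀ t : ℕ, γ * x ^ ((1 : ℝ) / 2 ^ t) ≤ A t := by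
    intro t
    induction t with
    | zero =>
      simp only [pow_zero, div_one, Real.rpow_one, hxdef]
      rw [mul_div_cancel₀ _ hγ.ne']
    | succ t ih =>
      have h1 : Real.sqrt (γ * A t) ≤ A (t + 1) := by
        have := hgrowth t; have := hApos t; linarith
      have key : γ * (γ * x ^ ((1 : ℝ) / 2 ^ t)) = (γ * x ^ ((1 : ℝ) / 2 ^ (t + 1))) ^ 2 := by
        have he : ((1 : ℝ) / 2 ^ t) = ((1 : ℝ) / 2 ^ (t + 1)) + ((1 : ℝ) / 2 ^ (t + 1)) := by
          rw [pow_succ]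
          field_simp
          ring
        rw [he, Real.rpow_add hxpos]; ring
      have h2 : γ * x ^ ((1 : ℝ) / 2 ^ (t + 1)) ≤ Real.sqrt (γ * A t) := by
        calc γ * x ^ ((1 : ℝ) / 2 ^ (t + 1))
            = Real.sqrt ((γ * x ^ ((1 : ℝ) / 2 ^ (t + 1))) ^ 2) := by
              rw [Real.sqrt_sq (by positivity)]
          _ = Real.sqrt (γ * (γ * x ^ ((1 : ℝ) / 2 ^ t))) := by rw [key]
          _ ≤ Real.sqrt (γ * A t) := by
              apply Real.sqrt_le_sqrt
              exact mul_le_mul_of_nonneg_left ih hγ.le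
      linarith
  -- key base bound: A n₀ ≥ γ / 9
  have hbase : γ / 9 ≤ A n₀ := by
    -- logb 2 y ≤ n₀ + 1
    have hceil2 : Real.logb 2 y ≤ ((n₀ : ℝ) + 1) := by
      have h1 := Int.le_ceil (Real.logb 2 y)
      have h2 : (⌈Real.logb 2 y⌉ : ℝ) = (n₀ : ℝ) + 1 := by
        have : ⌈Real.logb 2 y⌉ = t₀ + 1 := by omega
        rw [this, ht₀n]; push_cast; ring
      linarith
    have hy0 : 0 < y := by linarith
    have hyle : y ≤ (2 : ℝ) ^ ((n₀ : ℝ) + 1) :=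
      (Real.logb_le_iff_le_rpow (by norm_num) hy0).mp hceil2
    have hpow : (2 : ℝ) ^ ((n₀ : ℝ) + 1) = ((2 ^ (n₀ + 1) : ℕ) : ℝ) := by
      rw [show ((n₀ : ℝ) + 1) = ((n₀ + 1 : ℕ) : ℝ) by push_cast; ring,
        Real.rpow_natCast]
      push_cast
      ring
    set m : ℕ := 2 ^ n₀ with hmdef
    have hm1 : 1 ≤ m := Nat.one_le_two_pow
    have hyle' : y ≤ ((2 * m : ℕ) : ℝ) := by
      rw [hpow] at hyle
      have : 2 ^ (n₀ + 1) = 2 * m := by rw [hmdef]; ring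
      rwa [this] at hyle
    have hratio2 : γ / A 0 ≤ (9 : ℝ) ^ m := by
      have := (Real.logb_le_iff_le_rpow (b := 3) (by norm_num) hrpos).mp hyle'
      calc γ / A 0 ≤ (3 : ℝ) ^ (((2 * m : ℕ) : ℝ)) := this
        _ = (3 : ℝ) ^ (2 * m : ℕ) := Real.rpow_natCast 3 (2 * m)
        _ = (9 : ℝ) ^ m := by rw [pow_mul]; norm_num
    have h9mpos : (0 : ℝ) < (9 : ℝ) ^ m := by positivity
    have hxlow : ((9 : ℝ) ^ m)⁻¹ ≤ x := by
      rw [hxdef, le_div_iff₀ hγ, inv_mul_le_iff₀ h9mpos]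
      rw [div_le_iff₀ hA0pos] at hratio2
      linarith
    have hexp : ((9 : ℝ) ^ m)⁻¹ ^ ((1 : ℝ) / 2 ^ n₀) = (9 : ℝ)⁻¹ := by
      rw [← inv_pow, ← Real.rpow_natCast ((9 : ℝ)⁻¹) m, ← Real.rpow_mul (by norm_num)]
      have hm0 : ((m : ℝ)) ≠ 0 := by positivity
      have : ((m : ℝ)) * ((1 : ℝ) / 2 ^ n₀) = 1 := by
        rw [hmdef]
        push_cast
        field_simp
      rw [this, Real.rpow_one]
    have hmono : ((9 : ℝ))⁻¹ ≤ x ^ ((1 : ℝ) / 2 ^ n₀) := by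
      rw [← hexp]
      exact Real.rpow_le_rpow (by positivity) hxlow (by positivity)
    calc γ / 9 = γ * (9 : ℝ)⁻¹ := by ring
      _ ≤ γ * x ^ ((1 : ℝ) / 2 ^ n₀) := by
          exact mul_le_mul_of_nonneg_left hmono hγ.le
      _ ≤ A n₀ := phase1 n₀
  -- Phase 2
  have phase2 : ∀ k : ℕ, γ / 9 * ((k : ℝ) + 1) ^ 2 ≤ A (n₀ + k) := by
    intro k
    induction k with
    | zero => simpa using hbase
    | succ k ih =>
      have h1 : Real.sqrt (γ * A (n₀ + k)) + A (n₀ + k) ≤ A (n₀ + k + 1) := by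
        have := hgrowth (n₀ + k); linarith
      have h2 : γ / 3 * ((k : ℝ) + 1) ≤ Real.sqrt (γ * A (n₀ + k)) := by
        calc γ / 3 * ((k : ℝ) + 1)
            = Real.sqrt ((γ / 3 * ((k : ℝ) + 1)) ^ 2) := by
              rw [Real.sqrt_sq (by positivity)]
          _ ≤ Real.sqrt (γ * A (n₀ + k)) := by
              apply Real.sqrt_le_sqrt
              nlinarith [ih, hγ.le, sq_nonneg ((k : ℝ) + 1)]
      have heq : n₀ + (k + 1) = n₀ + k + 1 := rfl
      rw [heq]
      push_cast
      nlinarith [ih, h2, h1, hγ.le]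
  refine ⟨ht0nn, fun t => ⟨fun _ => phase1 t, fun hle => ?_⟩⟩
  have hn₀le : n₀ ≤ t := by omega
  obtain ⟨k, rfl⟩ : ∃ k, t = n₀ + k := ⟨t - n₀, by omega⟩
  have heq : ((n₀ + k : ℕ) : ℝ) - (t₀ : ℝ) + 1 = (k : ℝ) + 1 := by
    rw [ht₀n]; push_cast; ring
  rw [ge_iff_le, heq]
  exact phase2 k
end

section
/- Let (A_t)_{t≥0} be a sequence of positive reals satisfying A_{t+1} − A_t ≥ √(A_t) for all t ≥ 0, with 0 < A_0 ≤ 1/9. Define t_0 := ⌈log₂ log₃ (1/A_0)⌉ − 1. Then A_{t_0} ≥ 1/9. -/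
/-! Since `A (t + 1) ≥ √(A t)`, induction gives `A t ≥ A 0 ^ (1/2)^t = 3 ^ (-B / 2^t)` with
`B = log₃ (1 / A 0)`. The choice of `t₀` makes `B ≤ 2^(t₀+1)`, so the exponent `-B / 2^t₀` is
at least `-2` and `A t₀ ≥ 3⁻² = 1/9`. -/

open Real

lemma rpow_half_pow_le_of_sqrt_le_succ {a : ℕ → ℝ} (h0 : 0 ≤ a 0)
    (hstep : ∀ t, √(a t) ≤ a (t + 1)) (t : ℕ) : a 0 ^ ((1 / 2 : ℝ) ^ t) ≤ a t := by
  induction t with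
  | zero => simp
  | succ t ih =>
    calc a 0 ^ ((1 / 2 : ℝ) ^ (t + 1)) = √(a 0 ^ ((1 / 2 : ℝ) ^ t)) := by
          rw [sqrt_eq_rpow, ← rpow_mul h0, ← pow_succ]
      _ ≤ √(a t) := sqrt_le_sqrt ih
      _ ≤ a (t + 1) := hstep t

lemma le_two_pow_of_ceil_logb_le {y : ℝ} {n : ℕ} (h : ⌈logb 2 y⌉ ≤ n) : y ≤ 2 ^ n := by
  rcases le_or_gt y 0 with hy | hy
  · exact hy.trans (by positivity)
  · rw [← rpow_natCast, ← logb_le_iff_le_rpow one_lt_two hy]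
    exact_mod_cast Int.ceil_le.mp h

lemma one_ninth_le_rpow_half_pow {x : ℝ} (hx : 0 < x) {n : ℕ}
    (h : logb 3 (1 / x) ≤ 2 ^ (n + 1)) : 1 / 9 ≤ x ^ ((1 / 2 : ℝ) ^ n) := by
  rw [← logb_le_logb (b := 3) (by norm_num) (by norm_num) (by positivity), logb_rpow_eq_mul_logb_of_pos hx]
  have h9 : logb 3 (1 / 9) = -2 := by
    rw [one_div, logb_inv, show (9 : ℝ) = 3 ^ 2 by norm_num, logb_pow, logb_self_eq_one] <;> norm_num
  rw [one_div x, logb_inv] at h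
  have hhalf : (1 / 2 : ℝ) ^ n * 2 ^ (n + 1) = 2 := by
    rw [pow_succ, ← mul_assoc, ← mul_pow]; norm_num
  rw [h9]
  nlinarith [pow_pos (by norm_num : (0 : ℝ) < 1 / 2) n]

theorem reaches_one_ninth_by_t0_general
    (A : ℕ → ℝ) (hApos : ∀ t, 0 < A t)
    (hgrowth : ∀ t, A (t + 1) - A t ≥ Real.sqrt (A t))
    (t₀ : ℕ) (ht₀ : (t₀ : ℤ) = ⌈Real.logb 2 (Real.logb 3 (1 / A 0))⌉ - 1) :
    A t₀ ≥ 1 / 9 := by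
  have hstep : ∀ t, √(A t) ≤ A (t + 1) := fun t => by linarith [hgrowth t, hApos t]
  have hB : logb 3 (1 / A 0) ≤ 2 ^ (t₀ + 1) := le_two_pow_of_ceil_logb_le (by push_cast; omega)
  exact (one_ninth_le_rpow_half_pow (hApos 0) hB).trans
    (rpow_half_pow_le_of_sqrt_le_succ (hApos 0).le hstep t₀)

/-- If `A` is a positive sequence with `A (t+1) - A t ≥ √(A t)` for all `t`
and `0 < A 0 ≤ 1/9`, then, with `t₀ := ⌈log₂ log₃ (1 / A 0)⌉ - 1` (which is a
nonnegative integer under the assumptions), one has `A t₀ ≥ 1/9`. -/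
theorem reaches_one_ninth_by_t0
    (A : ℕ → ℝ) (hApos : ∀ t, 0 < A t)
    (hgrowth : ∀ t, A (t + 1) - A t ≥ Real.sqrt (A t))
    (hA0 : A 0 ≤ 1 / 9)
    (t₀ : ℕ) (ht₀ : (t₀ : ℤ) = ⌈Real.logb 2 (Real.logb 3 (1 / A 0))⌉ - 1) :
    A t₀ ≥ 1 / 9 :=
  reaches_one_ninth_by_t0_general A hApos hgrowth t₀ ht₀
end

section
/- Let (A_t)_{t≥0} be a sequence of positive reals and let t_0 ≥ 0 be an integer such that A_{t+1} − A_t ≥ √(A_t) for all t ≥ t_0 and A_{t_0} ≥ 1/9. Then for every t ≥ t_0, A_t ≥ (1/9)·(t − t_0 + 1)². -/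
/-- Quadratic growth after time `t₀`: if `A` is a positive sequence with
`A (t+1) - A t ≥ √(A t)` for all `t ≥ t₀` and `A t₀ ≥ 1/9`, then
`A t ≥ (1/9) * (t - t₀ + 1)^2` for all `t ≥ t₀`. -/
theorem quadratic_growth_after_t0
    (A : ℕ → ℝ) (hApos : ∀ t, 0 < A t) (t₀ : ℕ)
    (hgrowth : ∀ t, t₀ ≤ t → A (t + 1) - A t ≥ Real.sqrt (A t))
    (hAt₀ : A t₀ ≥ 1 / 9) :
    ∀ t, t₀ ≤ t → A t ≥ 1 / 9 * ((t : ℝ) - (t₀ : ℝ) + 1) ^ 2 := by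
  intro t ht
  induction t, ht using Nat.le_induction with
  | base => simpa using hAt₀
  | succ n hn ih =>
    have hle : (1:ℝ) ≤ (n:ℝ) - (t₀:ℝ) + 1 := by
      have : (t₀:ℝ) ≤ n := by exact_mod_cast hn
      linarith
    have hsq : Real.sqrt (A n) ≥ 1/3 * ((n:ℝ) - (t₀:ℝ) + 1) := by
      have h1 : Real.sqrt (1 / 9 * ((n:ℝ) - (t₀:ℝ) + 1) ^ 2) ≤ Real.sqrt (A n) :=
        Real.sqrt_le_sqrt ih
      have h2 : Real.sqrt (1 / 9 * ((n:ℝ) - (t₀:ℝ) + 1) ^ 2)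
          = 1/3 * ((n:ℝ) - (t₀:ℝ) + 1) := by
        rw [show (1:ℝ)/9 * ((n:ℝ) - (t₀:ℝ) + 1) ^ 2 = (1/3 * ((n:ℝ) - (t₀:ℝ) + 1))^2 by ring]
        exact Real.sqrt_sq (by linarith)
      linarith [h1, h2.symm.le]
    have hg := hgrowth n hn
    push_cast
    nlinarith [hle]
end

section
/- Let E be a real inner product space, C ⊆ E a nonempty set, and D ≥ 0 a real with ‖u − v‖ ≤ D for all u, v ∈ C. Let ψ : E → ℝ, f : E → ℝ, let x ∈ C, and let ḡ ∈ E, f̄ ∈ ℝ, L_f ≥ 0, δ_f ≥ 0 be such that: (i) f̄ + ⟨ḡ, u − x⟩ ≤ f(u) for every u ∈ C; and (ii) f(u) ≤ f̄ + ⟨ḡ, u − x⟩ + (L_f/2)·‖u − x‖² + δ_f for every u ∈ C. Let x⁺ ∈ C be a minimizer over C of the function y ↦ ⟨ḡ, y⟩ + ψ(y), and let x* ∈ C be a minimizer over C of F := f + ψ. Then F(x⁺) − F(x*) ≤ (L_f/2)·D² + δ_f. -/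
open scoped RealInnerProductSpace

/-- Full gradient step gives a good initial point: under a two-sided
approximate-smoothness model of `f` around `x` on a set `C` of diameter at most
`D`, if `x⁺` minimizes `y ↦ ⟪gbar, y⟫ + ψ y` over `C` and `x✶` minimizes
`F := f + ψ` over `C`, then `F x⁺ - F x✶ ≤ L_f / 2 * D ^ 2 + δ_f`. -/
theorem full_gradient_step_gives_good_initial_point
    {E : Type*} [NormedAddCommGroup E] [InnerProductSpace ℝ E]
    (C : Set E) (hC : C.Nonempty)
    (D : ℝ) (hD : 0 ≤ D) (hdiam : ∀ u ∈ C, ∀ v ∈ C, ‖u - v‖ ≤ D)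
    (ψ f : E → ℝ) (x : E) (hx : x ∈ C)
    (gbar : E) (fbar : ℝ) (Lf δf : ℝ) (hLf : 0 ≤ Lf) (hδf : 0 ≤ δf)
    (hlower : ∀ u ∈ C, fbar + ⟪gbar, u - x⟫ ≤ f u)
    (hupper : ∀ u ∈ C, f u ≤ fbar + ⟪gbar, u - x⟫ + Lf / 2 * ‖u - x‖ ^ 2 + δf)
    (xplus : E) (hxplus : xplus ∈ C)
    (hxplus_min : ∀ y ∈ C, ⟪gbar, xplus⟫ + ψ xplus ≤ ⟪gbar, y⟫ + ψ y)
    (xstar : E) (hxstar : xstar ∈ C)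
    (hxstar_min : ∀ y ∈ C, f xstar + ψ xstar ≤ f y + ψ y) :
    (f xplus + ψ xplus) - (f xstar + ψ xstar) ≤ Lf / 2 * D ^ 2 + δf := by
  have h1 := hupper xplus hxplus
  have h2 := hxplus_min xstar hxstar
  have h3 := hlower xstar hxstar
  have hd : ‖xplus - x‖ ≤ D := hdiam xplus hxplus x hx
  have hsq : Lf / 2 * ‖xplus - x‖ ^ 2 ≤ Lf / 2 * D ^ 2 := by
    apply mul_le_mul_of_nonneg_left _ (by linarith)
    exact pow_le_pow_left₀ (norm_nonneg _) hd 2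
  have e1 : ⟪gbar, xplus - x⟫ = ⟪gbar, xplus⟫ - ⟪gbar, x⟫ := inner_sub_right _ _ _
  have e2 : ⟪gbar, xstar - x⟫ = ⟪gbar, xstar⟫ - ⟪gbar, x⟫ := inner_sub_right _ _ _
  linarith
end

section
/- Let E be a real inner product space, C ⊆ E a nonempty set, ψ : E → ℝ, f : E → ℝ, x ∈ C, and let ḡ ∈ E, f̄ ∈ ℝ, L_f ≥ 0, δ_f ≥ 0 be such that: (i) f̄ + ⟨ḡ, u − x⟩ ≤ f(u) for every u ∈ C; and (ii) f(u) ≤ f̄ + ⟨ḡ, u − x⟩ + (L_f/2)·‖u − x‖² + δ_f for every u ∈ C. Let x⁺ ∈ C be a minimizer over C of the function y ↦ ⟨ḡ, y⟩ + ψ(y), and let x* ∈ C. Then f(x⁺) + ψ(x⁺) ≤ f(x*) + ψ(x*) + (L_f/2)·‖x⁺ − x‖² + δ_f. -/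
open scoped RealInnerProductSpace

/-- Key intermediate bound: under a two-sided approximate-smoothness model of
`f` around `x` on `C`, if `x⁺` minimizes `y ↦ ⟪gbar, y⟫ + ψ y` over `C`, then for
any `x✶ ∈ C`,
`f x⁺ + ψ x⁺ ≤ f x✶ + ψ x✶ + L_f / 2 * ‖x⁺ - x‖ ^ 2 + δ_f`. -/
theorem proximal_step_intermediate_bound
    {E : Type*} [NormedAddCommGroup E] [InnerProductSpace ℝ E]
    (C : Set E) (hC : C.Nonempty)
    (ψ f : E → ℝ) (x : E) (hx : x ∈ C)
    (gbar : E) (fbar : ℝ) (Lf δf : ℝ) (hLf : 0 ≤ Lf) (hδf : 0 ≤ δf)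
    (hlower : ∀ u ∈ C, fbar + ⟪gbar, u - x⟫ ≤ f u)
    (hupper : ∀ u ∈ C, f u ≤ fbar + ⟪gbar, u - x⟫ + Lf / 2 * ‖u - x‖ ^ 2 + δf)
    (xplus : E) (hxplus : xplus ∈ C)
    (hxplus_min : ∀ y ∈ C, ⟪gbar, xplus⟫ + ψ xplus ≤ ⟪gbar, y⟫ + ψ y)
    (xstar : E) (hxstar : xstar ∈ C) :
    f xplus + ψ xplus ≤ f xstar + ψ xstar + Lf / 2 * ‖xplus - x‖ ^ 2 + δf := by
  have h1 := hupper xplus hxplus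
  have h2 := hlower xstar hxstar
  have h3 := hxplus_min xstar hxstar
  rw [inner_sub_right] at h1 h2
  linarith
end
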